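/- Let d₁ be a natural number, d = 2·d₁, η : Fin d₁ → ℝ with η k ≠ 0 for all k, O a real orthogonal d×d matrix (Oᵀ * O = 1), and Λ = Oᵀ * Σ(η) * O. Then Λ is invertible, and for every μ : Fin d → ℝ, setting w = (2 : ℝ) • ((Λᵀ)⁻¹.mulVec μ), one has for every k < d₁: ((O.mulVec w)(2k))² + ((O.mulVec w)(2k+1))² = (4/(η k)²) · ( ((O.mulVec μ)(2k))² + ((O.mulVec μ)(2k+1))² ). -/

import Mathlib

/-! Since `O` is orthogonal, in the rotated coordinates `u = O w`, `v = O μ` the substitution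
becomes `Σ(η)ᵀ u = 2 v`. As `Σ(η)ᵀ = Σ(-η)` maps each coordinate pair `(u_{2k}, u_{2k+1})` to
`η_k (u_{2k+1}, -u_{2k})`, it multiplies the squared length of the pair by `η_k²`; the same
description shows that `Σ(η)` is injective, hence `Λ` is invertible. -/

open Matrix

/-- The canonical skew block matrix `Σ(η)` of size `d × d` determined by `η : Fin d₁ → ℝ`:
its only nonzero entries are `Σ(η) (2k) (2k+1) = -η k` and `Σ(η) (2k+1) (2k) = η k`
for `k < d₁` (0-based indices). -/
def canonicalSkew (d d₁ : ℕ) (η : Fin d₁ → ℝ) : Matrix (Fin d) (Fin d) ℝ :=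
  Matrix.of fun i j =>
    if h : i.val / 2 < d₁ ∧ i.val / 2 = j.val / 2 then
      if i.val % 2 = 0 ∧ j.val % 2 = 1 then -η ⟨i.val / 2, h.1⟩
      else if i.val % 2 = 1 ∧ j.val % 2 = 0 then η ⟨i.val / 2, h.1⟩
      else 0
    else 0

def idx0 {d₁ : ℕ} (k : Fin d₁) : Fin (2 * d₁) :=
  ⟨2 * k.val, by have := k.isLt; omega⟩

def idx1 {d₁ : ℕ} (k : Fin d₁) : Fin (2 * d₁) :=
  ⟨2 * k.val + 1, by have := k.isLt; omega⟩

lemma canonicalSkew_transpose (d d₁ : ℕ) (η : Fin d₁ → ℝ) :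
    (canonicalSkew d d₁ η)ᵀ = canonicalSkew d d₁ (-η) := by
  ext i j
  simp only [canonicalSkew, transpose_apply, of_apply, Pi.neg_apply, neg_neg]
  split_ifs <;> grind

section Blocks

variable {d₁ : ℕ}

lemma exists_eq_idx0_or_eq_idx1 (i : Fin (2 * d₁)) : ∃ k : Fin d₁, i = idx0 k ∨ i = idx1 k :=
  ⟨⟨i / 2, by omega⟩, by simp only [idx0, idx1, Fin.ext_iff]; omega⟩

lemma canonicalSkew_idx0_apply (η : Fin d₁ → ℝ) (k : Fin d₁) (j : Fin (2 * d₁)) :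
    canonicalSkew (2 * d₁) d₁ η (idx0 k) j = if j = idx1 k then -η k else 0 := by
  simp only [canonicalSkew, of_apply, idx0, idx1, Fin.ext_iff]
  split_ifs <;> grind

lemma canonicalSkew_idx1_apply (η : Fin d₁ → ℝ) (k : Fin d₁) (j : Fin (2 * d₁)) :
    canonicalSkew (2 * d₁) d₁ η (idx1 k) j = if j = idx0 k then η k else 0 := by
  simp only [canonicalSkew, of_apply, idx0, idx1, Fin.ext_iff]
  split_ifs <;> grind

@[simp] lemma canonicalSkew_mulVec_idx0 (η : Fin d₁ → ℝ) (x : Fin (2 * d₁) → ℝ) (k : Fin d₁) :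
    (canonicalSkew (2 * d₁) d₁ η *ᵥ x) (idx0 k) = -η k * x (idx1 k) := by
  simp [mulVec, dotProduct, canonicalSkew_idx0_apply, ite_mul]

@[simp] lemma canonicalSkew_mulVec_idx1 (η : Fin d₁ → ℝ) (x : Fin (2 * d₁) → ℝ) (k : Fin d₁) :
    (canonicalSkew (2 * d₁) d₁ η *ᵥ x) (idx1 k) = η k * x (idx0 k) := by
  simp [mulVec, dotProduct, canonicalSkew_idx1_apply, ite_mul]

lemma canonicalSkew_mulVec_injective {η : Fin d₁ → ℝ} (hη : ∀ k, η k ≠ 0) :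
    Function.Injective (canonicalSkew (2 * d₁) d₁ η).mulVec := by
  intro x y hxy
  funext i
  obtain ⟨k, rfl | rfl⟩ := exists_eq_idx0_or_eq_idx1 i
  · simpa [hη k] using congrFun hxy (idx1 k)
  · simpa [hη k] using congrFun hxy (idx0 k)

lemma isUnit_canonicalSkew {η : Fin d₁ → ℝ} (hη : ∀ k, η k ≠ 0) :
    IsUnit (canonicalSkew (2 * d₁) d₁ η) :=
  mulVec_injective_iff_isUnit.mp (canonicalSkew_mulVec_injective hη)

end Blocks

/-- When all `η k ≠ 0`, `Λ = OᵀΣ(η)O` is invertible, and substituting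
`w = 2(Λᵀ)⁻¹μ` one has `(Ow)_{2k}² + (Ow)_{2k+1}² = (4/η_k²)((Oμ)_{2k}² + (Oμ)_{2k+1}²)`. -/
theorem substitution_blocks (d₁ : ℕ) (η : Fin d₁ → ℝ) (hη : ∀ k, η k ≠ 0)
    (O : Matrix (Fin (2 * d₁)) (Fin (2 * d₁)) ℝ) (hO : Oᵀ * O = 1)
    (Λ : Matrix (Fin (2 * d₁)) (Fin (2 * d₁)) ℝ)
    (hΛ : Λ = Oᵀ * canonicalSkew (2 * d₁) d₁ η * O) :
    IsUnit Λ ∧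
    ∀ (μ : Fin (2 * d₁) → ℝ) (w : Fin (2 * d₁) → ℝ),
      w = (2 : ℝ) • ((Λᵀ)⁻¹.mulVec μ) →
      ∀ k : Fin d₁,
        (O.mulVec w (idx0 k)) ^ 2 + (O.mulVec w (idx1 k)) ^ 2 =
          (4 / (η k) ^ 2) * ((O.mulVec μ (idx0 k)) ^ 2 + (O.mulVec μ (idx1 k)) ^ 2) := by
  have hOunit : IsUnit O := (isUnit_iff_isUnit_det O).mpr (isUnit_det_of_left_inverse hO)
  have hΛunit : IsUnit Λ :=
    hΛ ▸ (((isUnit_transpose O).mpr hOunit).mul (isUnit_canonicalSkew hη)).mul hOunit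
  refine ⟨hΛunit, fun μ w hw k => ?_⟩
  have hΛT : Λᵀ = Oᵀ * canonicalSkew (2 * d₁) d₁ (-η) * O := by
    rw [hΛ, transpose_mul, transpose_mul, transpose_transpose, canonicalSkew_transpose,
      Matrix.mul_assoc]
  have hsubst : canonicalSkew (2 * d₁) d₁ (-η) *ᵥ (O *ᵥ w) = (2 : ℝ) • (O *ᵥ μ) :=
    calc _ = O *ᵥ (Λᵀ *ᵥ w) := by
          rw [hΛT, mulVec_mulVec, mulVec_mulVec, ← Matrix.mul_assoc, ← Matrix.mul_assoc,
            mul_eq_one_comm.mp hO, Matrix.one_mul]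
      _ = _ := by
          rw [hw, mulVec_smul, mulVec_mulVec, mul_nonsing_inv _
            (isUnit_det_transpose _ ((isUnit_iff_isUnit_det Λ).mp hΛunit)),
            one_mulVec, mulVec_smul]
  have h0 := congrFun hsubst (idx0 k)
  have h1 := congrFun hsubst (idx1 k)
  simp only [canonicalSkew_mulVec_idx0, canonicalSkew_mulVec_idx1, Pi.neg_apply, neg_neg,
    Pi.smul_apply, smul_eq_mul] at h0 h1
  rw [div_mul_eq_mul_div, eq_div_iff (pow_ne_zero 2 (hη k))]
  linear_combination (η k * (O *ᵥ w) (idx1 k) + 2 * (O *ᵥ μ) (idx0 k)) * h0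
    + (2 * (O *ᵥ μ) (idx1 k) - η k * (O *ᵥ w) (idx0 k)) * h1
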